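/- arXiv:2308.03178 — 2 statements merged into one kernel-verified Lean document; each statement's English description precedes it below -/
import Mathlib

section
/- Let X be a real Banach space, let φ map each nonempty bounded subset A ⊂ X to the bounded real-valued function φ(A) on the closed unit ball B_{X*} of the dual X* given by φ(A)(x*) = sup_{a ∈ A} x*(a), an element of ℓ∞(B_{X*}). Let F : [0,1] → 2^X \ {∅} be a bounded multifunction with F(t) convex for all t. Then for every nonempty closed bounded set L ⊂ X and every sequence of tagged partitions (Γ_k, T_k): if S(F, Γ_k, T_k) → L in Hausdorff distance, then S(φ∘F, Γ_k, T_k) → φ(L) in the sup norm of ℓ∞(B_{X*}). -/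
open Pointwise Filter Metric Set

/-- A tagged partition of `[0,1]` into finitely many segments with tags. -/
structure TaggedPartition where
  n : ℕ
  pt : Fin (n + 1) → ℝ
  tag : Fin n → ℝ
  pt_zero : pt 0 = 0
  pt_last : pt (Fin.last n) = 1
  pt_mono : Monotone pt
  tag_mem : ∀ i : Fin n, tag i ∈ Set.Icc (pt i.castSucc) (pt i.succ)

/-- The diameter (mesh) of a tagged partition. -/
noncomputable def TaggedPartition.mesh (P : TaggedPartition) : ℝ :=
  ⨆ i : Fin P.n, (P.pt i.succ - P.pt i.castSucc)

/-- Riemann integral sum of a multifunction, using Minkowski sums and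
pointwise scalar multiples of sets. -/
noncomputable def msum {X : Type*} [NormedAddCommGroup X] [NormedSpace ℝ X]
    (F : ℝ → Set X) (P : TaggedPartition) : Set X :=
  ∑ i : Fin P.n, (P.pt i.succ - P.pt i.castSucc) • F (P.tag i)

/-- The set `I(F)` of limits of Riemann integral sums of a multifunction `F`:
all closed nonempty subsets that are Hausdorff-distance limits of sequences of Riemann
sums along sequences of tagged partitions whose diameters tend to `0`. -/
def limitSets {X : Type*} [NormedAddCommGroup X] [NormedSpace ℝ X]
    (F : ℝ → Set X) : Set (Set X) :=
  {A | A.Nonempty ∧ IsClosed A ∧ ∃ P : ℕ → TaggedPartition,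
    Tendsto (fun k => (P k).mesh) atTop (nhds 0) ∧
    Tendsto (fun k => EMetric.hausdorffEdist (msum F (P k)) A) atTop (nhds 0)}

/-- The Radstrom-type embedding: a bounded set `A ⊆ X` is sent to the bounded function
`x* ↦ sup_{a ∈ A} x*(a)` on the closed unit ball of the dual space, an element of
`ℓ∞(B_{X*})`. -/
noncomputable def phiFun {X : Type*} [NormedAddCommGroup X] [NormedSpace ℝ X]
    (A : Set X) : ↥(Metric.closedBall (0 : X →L[ℝ] ℝ) 1) → ℝ :=
  fun g => sSup ((fun a => (g : X →L[ℝ] ℝ) a) '' A)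

/-- Riemann integral sum of the function `φ ∘ F : [0,1] → ℓ∞(B_{X*})`. -/
noncomputable def psum {X : Type*} [NormedAddCommGroup X] [NormedSpace ℝ X]
    (F : ℝ → Set X) (P : TaggedPartition) :
    ↥(Metric.closedBall (0 : X →L[ℝ] ℝ) 1) → ℝ :=
  ∑ i : Fin P.n, (P.pt i.succ - P.pt i.castSucc) • phiFun (F (P.tag i))

/-! Each `x*` in the unit ball of `X*` is 1-Lipschitz, so `φ` is 1-Lipschitz from the
Hausdorff distance to the sup norm; and `φ` is additive and positively homogeneous on nonempty
bounded sets, so it carries the Riemann sums of `F` to those of `φ ∘ F`. -/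

open Bornology

namespace TaggedPartition

lemma tag_mem_Icc (P : TaggedPartition) (i : Fin P.n) : P.tag i ∈ Icc (0 : ℝ) 1 :=
  ⟨P.pt_zero ▸ (P.pt_mono (Fin.zero_le _)).trans (P.tag_mem i).1,
    P.pt_last ▸ (P.tag_mem i).2.trans (P.pt_mono (Fin.le_last _))⟩

lemma length_nonneg (P : TaggedPartition) (i : Fin P.n) :
    0 ≤ P.pt i.succ - P.pt i.castSucc :=
  sub_nonneg.2 (P.pt_mono (Fin.castSucc_le_succ i))

end TaggedPartition

lemma Set.Nonempty.finsetSum {ι α : Type*} [AddCommMonoid α] {s : Finset ι} {A : ι → Set α}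
    (h : ∀ i ∈ s, (A i).Nonempty) : (∑ i ∈ s, A i).Nonempty :=
  Finset.sum_induction A Set.Nonempty (fun _ _ => .add) Set.zero_nonempty h

lemma Bornology.IsBounded.finsetSum {ι E : Type*} [SeminormedAddCommGroup E] {s : Finset ι}
    {A : ι → Set E} (h : ∀ i ∈ s, IsBounded (A i)) : IsBounded (∑ i ∈ s, A i) :=
  Finset.sum_induction A IsBounded (fun _ _ => .add)
    (Set.singleton_zero (α := E) ▸ isBounded_singleton) h

lemma BddAbove.finsetSum {ι M : Type*} [AddCommMonoid M] [Preorder M] [AddLeftMono M]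
    [AddRightMono M] {s : Finset ι} {A : ι → Set M} (h : ∀ i ∈ s, BddAbove (A i)) :
    BddAbove (∑ i ∈ s, A i) :=
  Finset.sum_induction A BddAbove (fun _ _ => .add)
    (Set.singleton_zero (α := M) ▸ bddAbove_singleton) h

lemma csSup_finsetSum {ι M : Type*} [ConditionallyCompleteLattice M] [AddCommGroup M]
    [AddLeftMono M] [AddRightMono M] (s : Finset ι) {A : ι → Set M}
    (hne : ∀ i ∈ s, (A i).Nonempty) (hbdd : ∀ i ∈ s, BddAbove (A i)) :
    sSup (∑ i ∈ s, A i) = ∑ i ∈ s, sSup (A i) := by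
  classical
  induction s using Finset.cons_induction with
  | empty => simp [← Set.singleton_zero]
  | cons i s hi ih =>
    have hne' : ∀ j ∈ s, (A j).Nonempty := fun j hj => hne j (Finset.mem_cons_of_mem hj)
    have hbdd' : ∀ j ∈ s, BddAbove (A j) := fun j hj => hbdd j (Finset.mem_cons_of_mem hj)
    rw [Finset.sum_cons, Finset.sum_cons, ← ih hne' hbdd']
    exact csSup_add (hne i (Finset.mem_cons_self i s)) (hbdd i (Finset.mem_cons_self i s))
      (.finsetSum hne') (.finsetSum hbdd')

lemma LipschitzWith.csSup_image_le_add_hausdorffDist {α : Type*} [PseudoMetricSpace α]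
    {K : NNReal} {f : α → ℝ} (hf : LipschitzWith K f) {A B : Set α} (hA : A.Nonempty)
    (hB : BddAbove (f '' B)) (hAB : hausdorffEDist A B ≠ ⊤) :
    sSup (f '' A) ≤ sSup (f '' B) + K * hausdorffDist A B := by
  refine csSup_le (hA.image f) ?_
  rintro _ ⟨a, ha, rfl⟩
  refine le_of_forall_pos_lt_add fun δ hδ => ?_
  have hK : 0 < (K : ℝ) + 1 := by positivity
  obtain ⟨b, hb, hab⟩ := exists_dist_lt_of_hausdorffDist_lt ha
    (lt_add_of_pos_right (hausdorffDist A B) (div_pos hδ hK)) hAB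
  have hfb : f b ≤ sSup (f '' B) := le_csSup hB (mem_image_of_mem f hb)
  have hKδ : K * (δ / (K + 1)) < δ := by
    rw [mul_div_assoc', div_lt_iff₀ hK]; linarith
  calc f a ≤ f b + K * dist a b := by
        linarith [abs_sub_le_iff.1 (Real.dist_eq _ _ ▸ hf.dist_le_mul a b)]
    _ ≤ sSup (f '' B) + K * (hausdorffDist A B + δ / (K + 1)) := by gcongr
    _ < sSup (f '' B) + K * hausdorffDist A B + δ := by linarith

section Phi

variable {X : Type*} [NormedAddCommGroup X] [NormedSpace ℝ X]

lemma phiFun_finsetSum_smul {ι : Type*} (s : Finset ι) {c : ι → ℝ} {A : ι → Set X}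
    (hc : ∀ i ∈ s, 0 ≤ c i) (hne : ∀ i ∈ s, (A i).Nonempty) (hb : ∀ i ∈ s, IsBounded (A i)) :
    phiFun (∑ i ∈ s, c i • A i) = ∑ i ∈ s, c i • phiFun (A i) := by
  funext g
  have hbdd : ∀ i ∈ s, BddAbove ((g : X →L[ℝ] ℝ) '' A i) := fun i hi =>
    ((g : X →L[ℝ] ℝ).lipschitz.isBounded_image (hb i hi)).bddAbove
  simp only [phiFun, Finset.sum_apply, Pi.smul_apply, Set.image_finsetSum, image_smul_set]
  rw [csSup_finsetSum s (fun i hi => ((hne i hi).image _).smul_set)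
    (fun i hi => (hbdd i hi).smul_of_nonneg (hc i hi))]
  exact Finset.sum_congr rfl fun i hi => Real.sSup_smul_of_nonneg (hc i hi) _

lemma abs_phiFun_sub_le_hausdorffDist {A B : Set X} (hA : A.Nonempty) (hB : B.Nonempty)
    (hAb : IsBounded A) (hBb : IsBounded B) (g : closedBall (0 : X →L[ℝ] ℝ) 1) :
    |phiFun A g - phiFun B g| ≤ hausdorffDist A B := by
  have hg : LipschitzWith 1 (g : X →L[ℝ] ℝ) :=
    (g : X →L[ℝ] ℝ).lipschitz.weaken (by exact_mod_cast mem_closedBall_zero_iff.1 g.2)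
  have hbdd {S : Set X} (hS : IsBounded S) : BddAbove ((g : X →L[ℝ] ℝ) '' S) :=
    (hg.isBounded_image hS).bddAbove
  have hAB := hg.csSup_image_le_add_hausdorffDist hA (hbdd hBb)
    (hausdorffEDist_ne_top_of_nonempty_of_bounded hA hB hAb hBb)
  have hBA := hg.csSup_image_le_add_hausdorffDist hB (hbdd hAb)
    (hausdorffEDist_ne_top_of_nonempty_of_bounded hB hA hBb hAb)
  rw [hausdorffDist_comm] at hBA
  simp only [phiFun, NNReal.coe_one, one_mul, abs_sub_le_iff] at hAB hBA ⊢
  constructor <;> linarith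

lemma tendstoUniformly_phiFun {ι : Type*} {l : Filter ι} {A : ι → Set X} {L : Set X}
    (hA : ∀ k, (A k).Nonempty) (hAb : ∀ k, IsBounded (A k)) (hL : L.Nonempty)
    (hLb : IsBounded L) (h : Tendsto (fun k => hausdorffEDist (A k) L) l (nhds 0)) :
    TendstoUniformly (fun k => phiFun (A k)) (phiFun L) l := by
  have hdist : Tendsto (fun k => hausdorffDist (A k) L) l (nhds 0) :=
    (ENNReal.tendsto_toReal ENNReal.zero_ne_top).comp h
  rw [Metric.tendstoUniformly_iff]
  intro ε hε
  filter_upwards [hdist.eventually_lt_const hε] with k hk g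
  rw [Real.dist_eq]
  exact (abs_phiFun_sub_le_hausdorffDist hL (hA k) hLb (hAb k) g).trans_lt
    (hausdorffDist_comm.trans_lt hk)

variable {F : ℝ → Set X}

lemma msum_nonempty (hF : ∀ t ∈ Icc (0 : ℝ) 1, (F t).Nonempty) (P : TaggedPartition) :
    (msum F P).Nonempty :=
  .finsetSum fun i _ => (hF _ (P.tag_mem_Icc i)).smul_set

lemma isBounded_msum (hF : ∀ t ∈ Icc (0 : ℝ) 1, IsBounded (F t)) (P : TaggedPartition) :
    IsBounded (msum F P) :=
  .finsetSum fun i _ => (hF _ (P.tag_mem_Icc i)).smul₀ _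

lemma psum_eq_phiFun_msum (hFne : ∀ t ∈ Icc (0 : ℝ) 1, (F t).Nonempty)
    (hFb : ∀ t ∈ Icc (0 : ℝ) 1, IsBounded (F t)) (P : TaggedPartition) :
    psum F P = phiFun (msum F P) :=
  (phiFun_finsetSum_smul _ (fun i _ => P.length_nonneg i)
    (fun i _ => hFne _ (P.tag_mem_Icc i)) (fun i _ => hFb _ (P.tag_mem_Icc i))).symm

end Phi

theorem tendstoUniformly_psum_of_tendsto_msum_general
    {X : Type*} [NormedAddCommGroup X] [NormedSpace ℝ X]
    (F : ℝ → Set X)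
    (hFne : ∀ t ∈ Set.Icc (0 : ℝ) 1, (F t).Nonempty)
    (hFbdd : ∃ M : ℝ, ∀ t ∈ Set.Icc (0 : ℝ) 1, ∀ a ∈ F t, ‖a‖ ≤ M)
    (L : Set X) (hLne : L.Nonempty)
    (hLbdd : Bornology.IsBounded L)
    (P : ℕ → TaggedPartition)
    (h : Tendsto (fun k => EMetric.hausdorffEdist (msum F (P k)) L) atTop (nhds 0)) :
    TendstoUniformly (fun k => psum F (P k)) (phiFun L) atTop := by
  obtain ⟨M, hM⟩ := hFbdd
  have hFb : ∀ t ∈ Icc (0 : ℝ) 1, IsBounded (F t) := fun t ht =>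
    isBounded_iff_forall_norm_le.2 ⟨M, hM t ht⟩
  simp only [psum_eq_phiFun_msum hFne hFb]
  exact tendstoUniformly_phiFun (fun k => msum_nonempty hFne (P k))
    (fun k => isBounded_msum hFb (P k)) hLne hLbdd h

/-- For a convex-valued bounded multifunction `F` and a nonempty closed bounded set `L`,
if the Riemann sums of `F` converge to `L` in Hausdorff distance along a sequence of
tagged partitions, then the Riemann sums of `φ ∘ F` converge to `φ(L)` uniformly
(i.e. in the sup norm of `ℓ∞(B_{X*})`). -/
theorem tendstoUniformly_psum_of_tendsto_msum
    {X : Type*} [NormedAddCommGroup X] [NormedSpace ℝ X] [CompleteSpace X]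
    (F : ℝ → Set X)
    (hFne : ∀ t ∈ Set.Icc (0 : ℝ) 1, (F t).Nonempty)
    (hFbdd : ∃ M : ℝ, ∀ t ∈ Set.Icc (0 : ℝ) 1, ∀ a ∈ F t, ‖a‖ ≤ M)
    (hFconv : ∀ t ∈ Set.Icc (0 : ℝ) 1, Convex ℝ (F t))
    (L : Set X) (hLne : L.Nonempty) (hLcl : IsClosed L)
    (hLbdd : Bornology.IsBounded L)
    (P : ℕ → TaggedPartition)
    (h : Tendsto (fun k => EMetric.hausdorffEdist (msum F (P k)) L) atTop (nhds 0)) :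
    TendstoUniformly (fun k => psum F (P k)) (phiFun L) atTop :=
  tendstoUniformly_psum_of_tendsto_msum_general F hFne hFbdd L hLne hLbdd P h
end

section
/- Let X be an infinite-dimensional real Banach space. Then there exists a bounded multifunction F : [0,1] → 2^X \ {∅} such that I(F) = ∅. -/
open Pointwise Filter Metric Set

open MeasureTheory

/-!
Mazur's construction gives unit vectors `uₙ` and functionals `fₙ` with `‖fₙ‖ ≤ 3` and
`fₘ (uₙ) = δₘₙ`. Index them by the finite sets `C ⊆ ℚ` and let `F t` consist of the `u_C` for
which `t` lies in a small neighbourhood `E_C` of `C`, of measure at most `1/4`. Given a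
partition `P`, choosing `C` near its tags puts `u_C` into the Riemann sum of `P`. On a Riemann
sum of a partition finer than the radius of `E_C`, however, `f_C` only sees the cells tagged in
`E_C`, whose total length is below `1/2`; so such sums stay at distance `≥ 1/6` from `u_C`,
which is incompatible with Hausdorff convergence of the Riemann sums.
-/

section Biorthogonal

variable {X : Type*} [NormedAddCommGroup X] [NormedSpace ℝ X]

theorem exists_norm_eq_one_forall_apply_eq_zero (hinf : ¬ FiniteDimensional ℝ X)
    (s : Finset (StrongDual ℝ X)) : ∃ x : X, ‖x‖ = 1 ∧ ∀ g ∈ s, g x = 0 := by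
  let Φ : X →ₗ[ℝ] (s → ℝ) := LinearMap.pi fun g => (g.1 : X →ₗ[ℝ] ℝ)
  have hker : LinearMap.ker Φ ≠ ⊥ := fun h =>
    hinf (Module.Finite.of_injective Φ (LinearMap.ker_eq_bot.mp h))
  obtain ⟨z, hz, hz0⟩ := Submodule.exists_mem_ne_zero_of_ne_bot hker
  refine ⟨‖z‖⁻¹ • z, norm_smul_inv_norm hz0, fun g hg => ?_⟩
  have hgz : g z = 0 := congrFun hz ⟨g, hg⟩
  rw [map_smul, hgz, smul_zero]

theorem IsCompact.exists_finset_norming {K : Set X} (hK : IsCompact K) {ε : ℝ} (hε : 0 < ε) :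
    ∃ s : Finset (StrongDual ℝ X), (∀ g ∈ s, ‖g‖ ≤ 1) ∧ ∀ x ∈ K, ∃ g ∈ s, ‖x‖ - ε < g x := by
  classical
  choose g hg_norm hg_apply using fun w : X => exists_dual_vector'' ℝ w
  obtain ⟨b, -, hb, hcover⟩ := hK.elim_finite_subcover_image (b := K)
    (c := fun w => {x | ‖x‖ - ε < g w x})
    (fun w _ => isOpen_lt (by fun_prop) (g w).continuous)
    (fun w _ => mem_biUnion ‹_› (by simp [hg_apply, hε]))
  refine ⟨hb.toFinset.image g, by simpa using fun w _ => hg_norm w, fun x hx => ?_⟩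
  obtain ⟨w, hw, hxw⟩ := mem_iUnion₂.mp (hcover hx)
  exact ⟨g w, Finset.mem_image_of_mem g (hb.mem_toFinset.mpr hw), hxw⟩

/-- The step of Mazur's construction of basic sequences. -/
theorem exists_norm_eq_one_forall_le_norm_add (hinf : ¬ FiniteDimensional ℝ X)
    (V : Submodule ℝ X) [FiniteDimensional ℝ V] (s : Finset (StrongDual ℝ X)) {ε : ℝ}
    (hε : 0 < ε) :
    ∃ x : X, ‖x‖ = 1 ∧ (∀ g ∈ s, g x = 0) ∧ ∀ v ∈ V, (1 - ε) * ‖v‖ ≤ ‖v + x‖ := by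
  classical
  obtain ⟨t, ht_norm, ht⟩ :=
    ((isCompact_sphere (0 : V) 1).image continuous_subtype_val).exists_finset_norming hε
  obtain ⟨x, hx, hx0⟩ := exists_norm_eq_one_forall_apply_eq_zero hinf (s ∪ t)
  refine ⟨x, hx, fun g hg => hx0 g (Finset.mem_union_left t hg), fun v hv => ?_⟩
  rcases eq_or_ne v 0 with rfl | hv0
  · simp
  have hv_pos : 0 < ‖v‖ := norm_pos_iff.mpr hv0
  have hnorm : ‖‖v‖⁻¹ • v‖ = 1 := by
    rw [norm_smul, norm_inv, norm_norm, inv_mul_cancel₀ hv_pos.ne']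
  obtain ⟨g, hgt, hg⟩ := ht (‖v‖⁻¹ • v)
    ⟨⟨‖v‖⁻¹ • v, V.smul_mem _ hv⟩, by simpa using hnorm, rfl⟩
  rw [hnorm, map_smul, smul_eq_mul] at hg
  have hgv : (1 - ε) * ‖v‖ ≤ g v := by
    rw [lt_inv_mul_iff₀ hv_pos] at hg
    linarith
  calc (1 - ε) * ‖v‖ ≤ g (v + x) := by
        rwa [map_add, hx0 g (Finset.mem_union_right s hgt), add_zero]
    _ ≤ ‖v + x‖ := (le_abs_self _).trans <| by
        simpa using (g.le_of_opNorm_le (ht_norm g hgt) (v + x))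

theorem Submodule.exists_dual_eq_one_of_le_norm_add {V : Submodule ℝ X} {x : X} {c : ℝ}
    (hc : 0 < c) (h : ∀ v ∈ V, c ≤ ‖x + v‖) :
    ∃ f : StrongDual ℝ X, f x = 1 ∧ (∀ v ∈ V, f v = 0) ∧ ‖f‖ ≤ c⁻¹ := by
  have hqx : c ≤ ‖V.mkQL x‖ := by
    refine (QuotientAddGroup.le_norm_iff).mpr fun m hm => ?_
    have hmx : m - x ∈ V := (Submodule.Quotient.eq V).mp hm
    simpa using h _ hmx
  have hq : ‖V.mkQL‖ ≤ 1 :=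
    ContinuousLinearMap.opNorm_le_bound _ zero_le_one fun m => by
      simpa using Submodule.Quotient.norm_mk_le V m
  have hqx₀ : ‖V.mkQL x‖ ≠ 0 := (hc.trans_le hqx).ne'
  obtain ⟨g, hg_norm, hg⟩ := exists_dual_vector ℝ (V.mkQL x) hqx₀
  refine ⟨‖V.mkQL x‖⁻¹ • g.comp V.mkQL, ?_, fun v hv => ?_, ?_⟩
  · rw [ContinuousLinearMap.smul_apply, ContinuousLinearMap.comp_apply, hg, smul_eq_mul]
    exact inv_mul_cancel₀ hqx₀
  · simp [(Submodule.Quotient.mk_eq_zero V).mpr hv]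
  · calc ‖‖V.mkQL x‖⁻¹ • g.comp V.mkQL‖ ≤ ‖V.mkQL x‖⁻¹ * (‖g‖ * ‖V.mkQL‖) := by
          rw [norm_smul, norm_inv, norm_norm]
          gcongr
          exact g.opNorm_comp_le _
      _ ≤ c⁻¹ * (1 * 1) := by gcongr; exact hg_norm.le
      _ = c⁻¹ := by ring

theorem exists_norm_eq_one_and_dual_eq_one (hinf : ¬ FiniteDimensional ℝ X)
    (V : Submodule ℝ X) [FiniteDimensional ℝ V] (s : Finset (StrongDual ℝ X)) :
    ∃ (x : X) (f : StrongDual ℝ X), ‖x‖ = 1 ∧ (∀ g ∈ s, g x = 0) ∧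
      f x = 1 ∧ (∀ v ∈ V, f v = 0) ∧ ‖f‖ ≤ 3 := by
  obtain ⟨x, hx, hsx, hVx⟩ :=
    exists_norm_eq_one_forall_le_norm_add hinf V s (ε := 1 / 2) (by norm_num)
  have hdist : ∀ v ∈ V, 3⁻¹ ≤ ‖x + v‖ := fun v hv => by
    have h₁ := hVx v hv
    have h₂ : ‖x‖ - ‖v‖ ≤ ‖x + v‖ := by simpa using norm_sub_le_norm_add x v
    rw [add_comm] at h₁
    linarith
  obtain ⟨f, hfx, hfV, hf⟩ := V.exists_dual_eq_one_of_le_norm_add (by norm_num) hdist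
  exact ⟨x, f, hx, hsx, hfx, hfV, by rwa [inv_inv] at hf⟩

theorem exists_biorthogonal_seq (hinf : ¬ FiniteDimensional ℝ X) :
    ∃ (u : ℕ → X) (f : ℕ → StrongDual ℝ X), (∀ n, ‖u n‖ = 1) ∧ (∀ n, ‖f n‖ ≤ 3) ∧
      ∀ m n, f m (u n) = if m = n then 1 else 0 := by
  classical
  obtain ⟨p, hp, hpr⟩ := exists_seq_of_forall_finset_exists
    (fun p : X × StrongDual ℝ X => ‖p.1‖ = 1 ∧ p.2 p.1 = 1 ∧ ‖p.2‖ ≤ 3)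
    (fun p q => p.2 q.1 = 0 ∧ q.2 p.1 = 0) fun s _ => by
      let V := Submodule.span ℝ (s.image Prod.fst : Set X)
      obtain ⟨x, f, hx, hsx, hfx, hfV, hf⟩ :=
        exists_norm_eq_one_and_dual_eq_one hinf V (s.image Prod.snd)
      exact ⟨(x, f), ⟨hx, hfx, hf⟩, fun q hq =>
        ⟨hsx _ (Finset.mem_image_of_mem _ hq),
          hfV _ (Submodule.subset_span (Finset.mem_image_of_mem _ hq))⟩⟩
  refine ⟨fun n => (p n).1, fun n => (p n).2, fun n => (hp n).1, fun n => (hp n).2.2,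
    fun m n => ?_⟩
  rcases lt_trichotomy m n with hmn | rfl | hmn
  · simp [(hpr m n hmn).1, hmn.ne]
  · simp [(hp m).2.1]
  · simp [(hpr n m hmn).2, hmn.ne']

end Biorthogonal

namespace TaggedPartition

variable (P : TaggedPartition)

def len (i : Fin P.n) : ℝ := P.pt i.succ - P.pt i.castSucc

def riemannSum (φ : ℝ → ℝ) : ℝ := ∑ i, P.len i * φ (P.tag i)

theorem len_nonneg (i : Fin P.n) : 0 ≤ P.len i :=
  sub_nonneg.mpr (P.pt_mono (Fin.castSucc_le_succ i))

theorem sum_len : ∑ i, P.len i = 1 := by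
  have h₁ := Fin.sum_univ_succ P.pt
  have h₂ := Fin.sum_univ_castSucc P.pt
  simp only [len, Finset.sum_sub_distrib, P.pt_zero, P.pt_last] at h₁ h₂ ⊢
  linarith

theorem len_le_mesh (i : Fin P.n) : P.len i ≤ P.mesh :=
  le_ciSup (Set.finite_range _).bddAbove i

theorem mesh_nonneg : 0 ≤ P.mesh :=
  Real.iSup_nonneg P.len_nonneg

theorem pairwise_disjoint_Ioc :
    Pairwise fun i j : Fin P.n =>
      Disjoint (Ioc (P.pt i.castSucc) (P.pt i.succ)) (Ioc (P.pt j.castSucc) (P.pt j.succ)) := by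
  have key : ∀ i j : Fin P.n, i < j →
      Disjoint (Ioc (P.pt i.castSucc) (P.pt i.succ)) (Ioc (P.pt j.castSucc) (P.pt j.succ)) :=
    fun i j hij => Ioc_disjoint_Ioc_of_le (P.pt_mono (Fin.succ_le_castSucc_iff.mpr hij))
  intro i j hij
  rcases hij.lt_or_gt with h | h
  · exact key i j h
  · exact (key j i h).symm

theorem Ioc_subset_cthickening_of_tag_mem {E : Set ℝ} {i : Fin P.n} (hi : P.tag i ∈ E) :
    Ioc (P.pt i.castSucc) (P.pt i.succ) ⊆ cthickening P.mesh E := fun x hx => by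
  have htag := P.tag_mem i
  have hlen := P.len_le_mesh i
  rw [len] at hlen
  refine mem_cthickening_of_dist_le x _ _ E hi ?_
  rw [Real.dist_eq, abs_le]
  constructor <;> linarith [hx.1, hx.2, htag.1, htag.2]

/-- The cells whose tags lie in `E` are disjoint and lie in the `mesh`-thickening of `E`. -/
theorem ofReal_riemannSum_indicator_le (E : Set ℝ) :
    ENNReal.ofReal (P.riemannSum (E.indicator 1)) ≤ volume (cthickening P.mesh E) := by
  classical
  let S := Finset.univ.filter fun i => P.tag i ∈ E
  have hsum : P.riemannSum (E.indicator 1) = ∑ i ∈ S, P.len i := by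
    simp [riemannSum, Set.indicator_apply, Finset.sum_filter, S]
  rw [hsum, ENNReal.ofReal_sum_of_nonneg fun i _ => P.len_nonneg i]
  calc ∑ i ∈ S, ENNReal.ofReal (P.len i)
      = volume (⋃ i ∈ S, Ioc (P.pt i.castSucc) (P.pt i.succ)) := by
        rw [measure_biUnion_finset (P.pairwise_disjoint_Ioc.set_pairwise _)
          fun _ _ => measurableSet_Ioc]
        simp [len]
    _ ≤ volume (cthickening P.mesh E) :=
        measure_mono <| iUnion₂_subset fun i hi =>
          P.Ioc_subset_cthickening_of_tag_mem (Finset.mem_filter.mp hi).2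

end TaggedPartition

theorem Real.volume_cthickening_finset_le (s : Finset ℝ) {r : ℝ} (hr : 0 ≤ r) :
    volume (cthickening r (s : Set ℝ)) ≤ s.card * ENNReal.ofReal (2 * r) := by
  rw [s.finite_toSet.isCompact.cthickening_eq_biUnion_closedBall hr]
  refine (measure_biUnion_finset_le s _).trans ?_
  simp [Real.volume_closedBall]

section RiemannSums

variable {X : Type*} [NormedAddCommGroup X] [NormedSpace ℝ X] {F : ℝ → Set X}
  {P : TaggedPartition}

theorem mem_msum_of_forall_mem {y : X} (h : ∀ i, y ∈ F (P.tag i)) : y ∈ msum F P := by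
  rw [msum, Set.mem_finsetSum]
  refine ⟨fun i => P.len i • y, fun {i} _ => smul_mem_smul_set (h i), ?_⟩
  rw [← Finset.sum_smul, P.sum_len, one_smul]

theorem apply_le_riemannSum_of_mem_msum (g : StrongDual ℝ X) {φ : ℝ → ℝ}
    (hφ : ∀ t, ∀ y ∈ F t, g y ≤ φ t) {q : X} (hq : q ∈ msum F P) : g q ≤ P.riemannSum φ := by
  rw [msum, Set.mem_finsetSum] at hq
  obtain ⟨z, hz, rfl⟩ := hq
  rw [map_sum]
  refine Finset.sum_le_sum fun i hi => ?_
  obtain ⟨y, hy, hyz⟩ := hz hi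
  rw [← hyz, map_smul, smul_eq_mul]
  exact mul_le_mul_of_nonneg_left (hφ _ y hy) (P.len_nonneg i)

end RiemannSums

theorem limitSets_eq_empty_of_forall_exists_far {X : Type*} [NormedAddCommGroup X]
    [NormedSpace ℝ X] {F : ℝ → Set X} {ε : ℝ} (hε : 0 < ε)
    (h : ∀ P : TaggedPartition, ∃ y ∈ msum F P, ∃ δ > 0,
      ∀ Q : TaggedPartition, Q.mesh ≤ δ → ∀ q ∈ msum F Q, ε ≤ dist y q) :
    limitSets F = ∅ := by
  refine eq_empty_iff_forall_notMem.mpr fun A ⟨_, _, P, hmesh, hlim⟩ => ?_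
  have hclose : ∀ᶠ k in atTop,
      hausdorffEDist (msum F (P k)) A < ENNReal.ofReal (ε / 2) :=
    hlim.eventually_lt_const (ENNReal.ofReal_pos.mpr (half_pos hε))
  obtain ⟨k₁, hk₁⟩ := hclose.exists
  obtain ⟨y, hy, δ, hδ, hfar⟩ := h (P k₁)
  obtain ⟨k₂, hk₂, hk₂_mesh⟩ := (hclose.and (hmesh.eventually_le_const hδ)).exists
  obtain ⟨a, ha, hya⟩ := exists_edist_lt_of_hausdorffEDist_lt hy hk₁
  obtain ⟨q, hq, haq⟩ := exists_edist_lt_of_hausdorffEDist_lt ha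
    (hausdorffEDist_comm.trans_lt hk₂)
  have := dist_triangle y a q
  linarith [hfar _ hk₂_mesh q hq, edist_lt_ofReal.mp hya, edist_lt_ofReal.mp haq]

/-- The covering radius shrinks with `#C`, so that `coverSet C` has measure at most `1/4`. -/
noncomputable def coverRadius (C : Finset ℚ) : ℝ := (8 * ((C.card : ℝ) + 1))⁻¹

noncomputable def coverSet (C : Finset ℚ) : Set ℝ :=
  cthickening (coverRadius C) (C.image ((↑) : ℚ → ℝ) : Set ℝ)

theorem coverRadius_pos (C : Finset ℚ) : 0 < coverRadius C := by
  unfold coverRadius; positivity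

theorem exists_subset_coverSet (T : Finset ℝ) : ∃ C : Finset ℚ, (T : Set ℝ) ⊆ coverSet C := by
  have hr : (0 : ℝ) < (8 * ((T.card : ℝ) + 1))⁻¹ := by positivity
  choose q hq using fun t : ℝ => exists_rat_near t hr
  refine ⟨T.image q, fun t ht =>
    mem_cthickening_of_dist_le t (q t) _ _ (by simpa using ⟨t, ht, rfl⟩) ?_⟩
  calc dist t (q t) ≤ (8 * ((T.card : ℝ) + 1))⁻¹ := (hq t).le
    _ ≤ coverRadius (T.image q) := by
      unfold coverRadius
      gcongr
      exact_mod_cast Finset.card_image_le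

theorem TaggedPartition.riemannSum_indicator_coverSet_le {Q : TaggedPartition}
    {C : Finset ℚ} (hQ : Q.mesh ≤ coverRadius C) :
    Q.riemannSum ((coverSet C).indicator 1) ≤ 1 / 2 := by
  have hr := coverRadius_pos C
  set r := coverRadius C
  set C' : Finset ℝ := C.image (↑)
  have hvol : ENNReal.ofReal (Q.riemannSum ((coverSet C).indicator 1))
      ≤ ENNReal.ofReal (C.card * (4 * r)) :=
    calc _ ≤ volume (cthickening Q.mesh (coverSet C)) := Q.ofReal_riemannSum_indicator_le _
      _ ≤ volume (cthickening (Q.mesh + r) (C' : Set ℝ)) :=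
          measure_mono (cthickening_cthickening_subset Q.mesh_nonneg hr.le _)
      _ ≤ C'.card * ENNReal.ofReal (2 * (Q.mesh + r)) :=
          Real.volume_cthickening_finset_le C' (by linarith [Q.mesh_nonneg])
      _ ≤ C.card * ENNReal.ofReal (4 * r) := by
          gcongr ?_ * ENNReal.ofReal ?_
          · exact_mod_cast Finset.card_image_le
          · linarith
      _ = ENNReal.ofReal (C.card * (4 * r)) := by
          rw [ENNReal.ofReal_mul (Nat.cast_nonneg _), ENNReal.ofReal_natCast]
  refine ((ENNReal.ofReal_le_ofReal_iff (by positivity)).mp hvol).trans ?_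
  have : (C.card : ℝ) * (4 * r) = C.card / (2 * (C.card + 1)) := by
    simp only [r, coverRadius]; field_simp; ring
  rw [this, div_le_iff₀ (by positivity)]
  linarith

section CoverMultifunction

variable {X : Type*} [NormedAddCommGroup X] [NormedSpace ℝ X]

def coverMultifunction (u : ℕ → X) (t : ℝ) : Set X :=
  (fun C : Finset ℚ => u (Encodable.encode C)) '' {C | t ∈ coverSet C}

theorem apply_le_indicator_coverSet {u : ℕ → X} {f : ℕ → StrongDual ℝ X}
    (hfu : ∀ m n, f m (u n) = if m = n then 1 else 0) (C : Finset ℚ) (t : ℝ) :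
    ∀ y ∈ coverMultifunction u t, f (Encodable.encode C) y ≤ (coverSet C).indicator 1 t := by
  rintro _ ⟨C', hC', rfl⟩
  rw [hfu]
  split_ifs with h
  · rw [Encodable.encode_injective h, indicator_of_mem (show t ∈ coverSet C' from hC'),
      Pi.one_apply]
  · exact indicator_nonneg (fun _ _ => zero_le_one) t

end CoverMultifunction

theorem exists_boundedMultifunction_limitSets_empty_of_infiniteDimensional_general
    {X : Type*} [NormedAddCommGroup X] [NormedSpace ℝ X]
    (hinf : ¬ FiniteDimensional ℝ X) :
    ∃ F : ℝ → Set X,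
      (∀ t ∈ Set.Icc (0 : ℝ) 1, (F t).Nonempty) ∧
      (∃ M : ℝ, ∀ t ∈ Set.Icc (0 : ℝ) 1, ∀ a ∈ F t, ‖a‖ ≤ M) ∧
      limitSets F = ∅ := by
  obtain ⟨u, f, hu, hf, hfu⟩ := exists_biorthogonal_seq hinf
  refine ⟨coverMultifunction u, fun t _ => ?_, ⟨1, fun t _ => ?_⟩, ?_⟩
  · obtain ⟨C, hC⟩ := exists_subset_coverSet {t}
    exact ⟨_, C, hC (by simp), rfl⟩
  · rintro _ ⟨C, -, rfl⟩
    exact (hu _).le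
  refine limitSets_eq_empty_of_forall_exists_far (ε := 1 / 6) (by norm_num) fun P => ?_
  obtain ⟨C, hC⟩ := exists_subset_coverSet (Finset.univ.image P.tag)
  set j := Encodable.encode C
  refine ⟨u j, mem_msum_of_forall_mem fun i => ⟨C, hC (by simp), rfl⟩, coverRadius C,
    coverRadius_pos C, fun Q hQ q hq => ?_⟩
  have hq_le : f j q ≤ 1 / 2 :=
    (apply_le_riemannSum_of_mem_msum _ (apply_le_indicator_coverSet hfu C) hq).trans
      (Q.riemannSum_indicator_coverSet_le hQ)
  have hgap : f j (u j) - f j q ≤ 3 * dist (u j) q :=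
    calc f j (u j) - f j q ≤ ‖f j (u j - q)‖ := by rw [map_sub]; exact le_abs_self _
      _ ≤ ‖f j‖ * ‖u j - q‖ := (f j).le_opNorm _
      _ ≤ 3 * dist (u j) q := by rw [dist_eq_norm]; gcongr; exact hf j
  rw [hfu, if_pos rfl] at hgap
  linarith

/-- In every infinite-dimensional real Banach space there is a bounded multifunction `F`
on `[0,1]` with `I(F) = ∅`. -/
theorem exists_boundedMultifunction_limitSets_empty_of_infiniteDimensional
    {X : Type*} [NormedAddCommGroup X] [NormedSpace ℝ X] [CompleteSpace X]
    (hinf : ¬ FiniteDimensional ℝ X) :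
    ∃ F : ℝ → Set X,
      (∀ t ∈ Set.Icc (0 : ℝ) 1, (F t).Nonempty) ∧
      (∃ M : ℝ, ∀ t ∈ Set.Icc (0 : ℝ) 1, ∀ a ∈ F t, ‖a‖ ≤ M) ∧
      limitSets F = ∅ :=
  exists_boundedMultifunction_limitSets_empty_of_infiniteDimensional_general hinf
end
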